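/- arXiv:2505.12976 — 2 statements merged into one kernel-verified Lean document; each statement's English description precedes it below -/
import Mathlib

section
/- Let (A, E, μ) be a weighted tournament graph, let id : A → ℕ be injective, and for each vertex c define s(c) = min{id(u) : u reaches c} and t(c) = min{id(u) : c reaches u}, where reachability is taken in the digraph (A, E). If s(c) > t(c) for a candidate c, then the vertex u with id(u) = t(c) is reached by c but does not reach c; consequently u is not a Schulze winner. -/
variable {V : Type*}

/-- Width of a path given as a list of vertices: the minimum weight of its edges. -/
def pathWidth (μ : V → V → ℝ) : List V → ℝ
  | [x, y] => μ x y
  | x :: y :: z :: rest => min (μ x y) (pathWidth μ (y :: z :: rest))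
  | _ => 0

/-- `xs` is a path from `a` to `b` in the digraph with edge relation `E`. -/
def IsPath (E : V → V → Prop) (a b : V) (xs : List V) : Prop :=
  xs.Chain' E ∧ xs.head? = some a ∧ xs.getLast? = some b

/-- `p(a,b)`: the maximum width of a path from `a` to `b` (`0` if there is none). -/
noncomputable def widestPath (E : V → V → Prop) (μ : V → V → ℝ) (a b : V) : ℝ :=
  sSup {w : ℝ | ∃ xs : List V, IsPath E a b xs ∧ pathWidth μ xs = w}

/-- `a` beats `b` according to the Schulze method: `p(a,b) > p(b,a)`. -/
def Beats (E : V → V → Prop) (μ : V → V → ℝ) (a b : V) : Prop :=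
  widestPath E μ b a < widestPath E μ a b

/-- `c` is a Schulze winner: no candidate beats `c`. -/
def SchulzeWinner (E : V → V → Prop) (μ : V → V → ℝ) (c : V) : Prop :=
  ∀ b : V, ¬ Beats E μ b c


/-- `s(c)`: the minimum id among vertices that reach `c`. -/
noncomputable def minIdTo (E : V → V → Prop) (id : V → ℕ) (c : V) : ℕ :=
  sInf {n : ℕ | ∃ u : V, id u = n ∧ Relation.ReflTransGen E u c}

/-- `t(c)`: the minimum id among vertices reached by `c`. -/
noncomputable def minIdFrom (E : V → V → Prop) (id : V → ℕ) (c : V) : ℕ :=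
  sInf {n : ℕ | ∃ u : V, id u = n ∧ Relation.ReflTransGen E c u}

lemma chain_rtg (E : V → V → Prop) :
    ∀ (xs : List V) (a b : V), List.Chain E a xs → (a :: xs).getLast (by simp) = b →
      Relation.ReflTransGen E a b := by
  intro xs
  induction xs with
  | nil => intro a b _ h; simp at h; exact h ▸ Relation.ReflTransGen.refl
  | cons x t ih =>
    intro a b hc hl
    cases hc with
    | cons_cons hax hchain =>
      have h2 : (x :: t).getLast (by simp) = b := by
        rwa [List.getLast_cons (by simp : x :: t ≠ [])] at hl
      exact Relation.ReflTransGen.head hax (ih x b hchain h2)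

lemma isPath_rtg {E : V → V → Prop} {a b : V} {xs : List V} (h : IsPath E a b xs) :
    Relation.ReflTransGen E a b := by
  obtain ⟨hch, hh, hl⟩ := h
  cases xs with
  | nil => simp at hh
  | cons x t =>
    have hx : x = a := by simpa using hh
    subst hx
    have hlast : (x :: t).getLast (by simp) = b := by
      have h' := List.getLast?_eq_getLast (l := x :: t) (by simp)
      rw [h'] at hl; exact Option.some_injective _ hl
    exact chain_rtg E t x b hch hlast

lemma isPath_two_le {E : V → V → Prop} {a b : V} {xs : List V} (h : IsPath E a b xs)
    (hne : a ≠ b) : 2 ≤ xs.length := by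
  obtain ⟨hch, hh, hl⟩ := h
  match xs with
  | [] => simp at hh
  | [x] =>
    simp at hh hl
    exact absurd (hh.symm.trans hl) hne
  | x :: y :: t => simp

lemma exists_pos_path (E : V → V → Prop) (μ : V → V → ℝ)
    (hpos : ∀ x y, E x y → 0 < μ x y) {a b : V}
    (h : Relation.ReflTransGen E a b) : a ≠ b →
    ∃ xs : List V, IsPath E a b xs ∧ 0 < pathWidth μ xs := by
  refine Relation.ReflTransGen.head_induction_on (motive := fun z _ => z ≠ b →
      ∃ xs : List V, IsPath E z b xs ∧ 0 < pathWidth μ xs) h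
    (fun hne => absurd rfl hne) ?_
  intro x x' hax hrtg ih _
  by_cases h' : x' = b
  · subst h'
    exact ⟨[x, x'], ⟨List.IsChain.cons_cons hax (by constructor), by simp, by simp⟩, hpos _ _ hax⟩
  · obtain ⟨xs, hp, hw⟩ := ih h'
    have h2 := isPath_two_le hp h'
    obtain ⟨hch, hh, hl⟩ := hp
    match xs, h2 with
    | y :: z :: t, _ =>
      have hy : y = x' := by simpa using hh
      subst hy
      refine ⟨x :: y :: z :: t, ⟨List.isChain_cons_cons.mpr ⟨hax, hch⟩, by simp,
        by simpa using hl⟩, ?_⟩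
      have : pathWidth μ (x :: y :: z :: t) = min (μ x y) (pathWidth μ (y :: z :: t)) := rfl
      rw [this]
      exact lt_min (hpos _ _ hax) hw

lemma pathWidth_le (μ : V → V → ℝ) (M : ℝ) (hM : ∀ x y, μ x y ≤ M) :
    ∀ xs : List V, 2 ≤ xs.length → pathWidth μ xs ≤ M := by
  intro xs
  match xs with
  | [] => simp
  | [x] => simp
  | [x, y] => intro _; simpa [pathWidth] using hM x y
  | x :: y :: z :: t =>
    intro _
    have : pathWidth μ (x :: y :: z :: t) = min (μ x y) (pathWidth μ (y :: z :: t)) := rfl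
    rw [this]
    exact le_trans (min_le_left _ _) (hM x y)

theorem stmt_10 {A : Type*} [Fintype A] (E : A → A → Prop) (μ : A → A → ℝ)
    (hirr : ∀ x, ¬ E x x)
    (hpos : ∀ x y, E x y → 0 < μ x y)
    (id : A → ℕ) (hinj : Function.Injective id)
    (c : A) (hgt : minIdFrom E id c < minIdTo E id c) :
    (∃ u : A, id u = minIdFrom E id c ∧
        Relation.ReflTransGen E c u ∧ ¬ Relation.ReflTransGen E u c ∧
        ¬ SchulzeWinner E μ u) := by
  classical
  have hset : {n : ℕ | ∃ u : A, id u = n ∧ Relation.ReflTransGen E c u}.Nonempty :=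
    ⟨id c, c, rfl, Relation.ReflTransGen.refl⟩
  obtain ⟨u, hu, hcu⟩ := Nat.sInf_mem hset
  have hnuc : ¬ Relation.ReflTransGen E u c := by
    intro huc
    have h1 : minIdTo E id c ≤ id u := Nat.sInf_le ⟨u, rfl, huc⟩
    rw [hu] at h1
    exact absurd (lt_of_le_of_lt h1 hgt) (lt_irrefl _)
  have hne : c ≠ u := fun h => hnuc (h ▸ Relation.ReflTransGen.refl)
  refine ⟨u, hu, hcu, hnuc, ?_⟩
  intro hwin
  apply hwin c
  unfold Beats
  -- widestPath u c = 0
  have hempty : {w : ℝ | ∃ xs : List A, IsPath E u c xs ∧ pathWidth μ xs = w} = ∅ := by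
    ext w
    simp only [Set.mem_setOf_eq, Set.mem_empty_iff_false, iff_false]
    rintro ⟨xs, hp, -⟩
    exact hnuc (isPath_rtg hp)
  have h0 : widestPath E μ u c = 0 := by
    rw [widestPath, hempty, Real.sSup_empty]
  rw [h0]
  -- widestPath c u > 0
  have hAne : (Finset.univ : Finset (A × A)).Nonempty := ⟨(c, c), Finset.mem_univ _⟩
  set M := Finset.sup' Finset.univ hAne (fun p : A × A => μ p.1 p.2) with hM
  have hMle : ∀ x y : A, μ x y ≤ M := fun x y =>
    Finset.le_sup' (f := fun p : A × A => μ p.1 p.2) (Finset.mem_univ (x, y))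
  have hbdd : BddAbove {w : ℝ | ∃ xs : List A, IsPath E c u xs ∧ pathWidth μ xs = w} := by
    refine ⟨M, ?_⟩
    rintro w ⟨xs, hp, rfl⟩
    exact pathWidth_le μ M hMle xs (isPath_two_le hp hne)
  obtain ⟨xs, hp, hw⟩ := exists_pos_path E μ hpos hcu hne
  have : pathWidth μ xs ≤ widestPath E μ c u := le_csSup hbdd ⟨xs, hp, rfl⟩
  linarith
end

section
/- Every weighted tournament graph (A, E, μ) with A nonempty has at least one Schulze winner. -/
variable {V : Type*}

lemma pathWidth_cons_cons (μ : V → V → ℝ) (x y : V) {l : List V} (hl : l ≠ []) :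
    pathWidth μ (x :: y :: l) = min (μ x y) (pathWidth μ (y :: l)) := by
  cases l with
  | nil => exact absurd rfl hl
  | cons z r => rfl

lemma pathWidth_nonneg (E : V → V → Prop) (μ : V → V → ℝ)
    (hpos : ∀ a b, E a b → 0 < μ a b) :
    ∀ xs : List V, xs.Chain' E → 0 ≤ pathWidth μ xs := by
  intro xs
  induction xs with
  | nil => intro _; simp [pathWidth]
  | cons x xs ih =>
    cases xs with
    | nil => intro _; simp [pathWidth]
    | cons y l =>
      intro hc
      unfold List.Chain' at hc; rw [List.isChain_cons_cons] at hc
      cases l with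
      | nil => exact le_of_lt (hpos _ _ hc.1)
      | cons z r =>
        have h1 := le_of_lt (hpos _ _ hc.1)
        have h2 := ih hc.2
        simp only [pathWidth]
        exact le_min h1 h2

lemma pathWidth_mem (μ : V → V → ℝ) :
    ∀ xs : List V, pathWidth μ xs ∈ insert (0:ℝ) (Set.range fun p : V × V => μ p.1 p.2) := by
  intro xs
  induction xs with
  | nil => simp [pathWidth]
  | cons x xs ih =>
    cases xs with
    | nil => simp [pathWidth]
    | cons y l =>
      cases l with
      | nil => exact Set.mem_insert_of_mem _ ⟨(x, y), rfl⟩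
      | cons z r =>
        simp only [pathWidth]
        rcases min_cases (μ x y) (pathWidth μ (y :: z :: r)) with ⟨h, _⟩ | ⟨h, _⟩
        · rw [h]; exact Set.mem_insert_of_mem _ ⟨(x, y), rfl⟩
        · rw [h]; exact ih

lemma concat_aux (E : V → V → Prop) (μ : V → V → ℝ) (y b : V) (t : List V)
    (hys : (y :: b :: t).Chain' E) :
    ∀ xs : List V, xs.Chain' E → xs.getLast? = some y →
      ((xs ++ b :: t).Chain' E ∧
        min (pathWidth μ xs) (pathWidth μ (y :: b :: t)) ≤ pathWidth μ (xs ++ b :: t)) := by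
  intro xs
  induction xs with
  | nil => intro _ h; simp at h
  | cons x1 xs ih =>
    cases xs with
    | nil =>
      intro _ hlast
      simp at hlast
      subst hlast
      exact ⟨hys, by simpa using min_le_right _ _⟩
    | cons x2 rest =>
      intro hc hlast
      unfold List.Chain' at hc; rw [List.isChain_cons_cons] at hc
      rw [List.getLast?_cons_cons] at hlast
      obtain ⟨hcc, hw⟩ := ih hc.2 hlast
      constructor
      · exact List.isChain_cons_cons.mpr ⟨hc.1, by simpa [List.Chain'] using hcc⟩
      · have hne : rest ++ b :: t ≠ [] := by simp
        rw [List.cons_append, List.cons_append,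
          pathWidth_cons_cons μ x1 x2 hne]
        cases rest with
        | nil =>
          simp at hlast
          subst hlast
          simp only [List.nil_append]
          exact le_refl _
        | cons r rs =>
          have hxs : pathWidth μ (x1 :: x2 :: r :: rs) =
              min (μ x1 x2) (pathWidth μ (x2 :: r :: rs)) := rfl
          rw [hxs]
          rw [List.cons_append] at hw ⊢
          refine le_min ?_ ?_
          · exact (min_le_left _ _).trans (min_le_left _ _)
          · refine le_trans ?_ hw
            exact le_min ((min_le_left _ _).trans (min_le_right _ _)) (min_le_right _ _)

section Main

variable {A : Type*} [Fintype A] (E : A → A → Prop) (μ : A → A → ℝ)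

lemma pathSet_finite (a b : A) :
    {w : ℝ | ∃ xs : List A, IsPath E a b xs ∧ pathWidth μ xs = w}.Finite := by
  apply Set.Finite.subset (Set.Finite.insert (0:ℝ)
    (Set.finite_range fun p : A × A => μ p.1 p.2))
  rintro w ⟨xs, _, rfl⟩
  exact pathWidth_mem μ xs

lemma le_widestPath {a b : A} {w : ℝ}
    (hw : w ∈ {w : ℝ | ∃ xs : List A, IsPath E a b xs ∧ pathWidth μ xs = w}) :
    w ≤ widestPath E μ a b :=
  le_csSup (pathSet_finite E μ a b).bddAbove hw

lemma widestPath_mem {a b : A}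
    (h : {w : ℝ | ∃ xs : List A, IsPath E a b xs ∧ pathWidth μ xs = w}.Nonempty) :
    widestPath E μ a b ∈ {w : ℝ | ∃ xs : List A, IsPath E a b xs ∧ pathWidth μ xs = w} :=
  h.csSup_mem (pathSet_finite E μ a b)

lemma widestPath_nonneg (hpos : ∀ a b, E a b → 0 < μ a b) (a b : A) :
    0 ≤ widestPath E μ a b := by
  by_cases h : {w : ℝ | ∃ xs : List A, IsPath E a b xs ∧ pathWidth μ xs = w}.Nonempty
  · obtain ⟨xs, hp, heq⟩ := widestPath_mem E μ h
    rw [← heq]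
    exact pathWidth_nonneg E μ hpos xs hp.1
  · rw [Set.not_nonempty_iff_eq_empty] at h
    unfold widestPath
    rw [h, Real.sSup_empty]

lemma widestPath_triangle (hpos : ∀ a b, E a b → 0 < μ a b) (x y z : A) :
    min (widestPath E μ x y) (widestPath E μ y z) ≤ widestPath E μ x z := by
  by_cases h1 : {w : ℝ | ∃ xs : List A, IsPath E x y xs ∧ pathWidth μ xs = w}.Nonempty
  · by_cases h2 : {w : ℝ | ∃ xs : List A, IsPath E y z xs ∧ pathWidth μ xs = w}.Nonempty
    · obtain ⟨xs, hpx, heqx⟩ := widestPath_mem E μ h1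
      obtain ⟨ys, hpy, heqy⟩ := widestPath_mem E μ h2
      obtain ⟨hcy, hhy, hly⟩ := hpy
      cases ys with
      | nil => simp at hhy
      | cons y0 ys' =>
        simp only [List.head?_cons, Option.some.injEq] at hhy
        subst hhy
        cases ys' with
        | nil =>
          simp only [List.getLast?_singleton, Option.some.injEq] at hly
          subst hly
          exact min_le_left _ _
        | cons b t =>
          obtain ⟨hcx, hhx, hlx⟩ := hpx
          obtain ⟨hchain, hwid⟩ := concat_aux E μ y0 b t hcy xs hcx hlx
          have hxsne : xs ≠ [] := by rintro rfl; simp at hhx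
          have hmem : pathWidth μ (xs ++ b :: t) ∈
              {w : ℝ | ∃ zs : List A, IsPath E x z zs ∧ pathWidth μ zs = w} := by
            refine ⟨xs ++ b :: t, ⟨hchain, ?_, ?_⟩, rfl⟩
            · rw [List.head?_append_of_ne_nil _ hxsne]
              exact hhx
            · rw [List.getLast?_append_of_ne_nil _ (by simp : (b :: t : List A) ≠ [])]
              rw [List.getLast?_cons_cons] at hly
              exact hly
          refine le_trans ?_ (le_widestPath E μ hmem)
          rw [← heqx, ← heqy]
          exact hwid
    · refine (min_le_right _ _).trans ?_
      have : widestPath E μ y z = 0 := by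
        rw [Set.not_nonempty_iff_eq_empty] at h2
        unfold widestPath; rw [h2, Real.sSup_empty]
      rw [this]
      exact widestPath_nonneg E μ hpos x z
  · refine (min_le_left _ _).trans ?_
    have : widestPath E μ x y = 0 := by
      rw [Set.not_nonempty_iff_eq_empty] at h1
      unfold widestPath; rw [h1, Real.sSup_empty]
    rw [this]
    exact widestPath_nonneg E μ hpos x z


lemma beats_trans (hpos : ∀ a b, E a b → 0 < μ a b) {a b c : A}
    (h1 : Beats E μ a b) (h2 : Beats E μ b c) : Beats E μ a c := by
  unfold Beats at h1 h2 ⊢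
  by_contra h
  push_neg at h
  have t1 := widestPath_triangle E μ hpos a b c
  have t2 := widestPath_triangle E μ hpos c a b
  have t3 := widestPath_triangle E μ hpos b c a
  rcases min_cases (widestPath E μ a b) (widestPath E μ b c) with ⟨e1, f1⟩ | ⟨e1, f1⟩ <;>
  rcases min_cases (widestPath E μ c a) (widestPath E μ a b) with ⟨e2, f2⟩ | ⟨e2, f2⟩ <;>
  rcases min_cases (widestPath E μ b c) (widestPath E μ c a) with ⟨e3, f3⟩ | ⟨e3, f3⟩ <;>
  rw [e1] at t1 <;> rw [e2] at t2 <;> rw [e3] at t3 <;> linarith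

end Main

theorem stmt_18 {A : Type*} [Fintype A] [Nonempty A] (E : A → A → Prop) (μ : A → A → ℝ)
    (hirr : ∀ a, ¬ E a a)
    (hpos : ∀ a b, E a b → 0 < μ a b) :
    ∃ c : A, SchulzeWinner E μ c := by
  letI : IsTrans A (Beats E μ) := ⟨fun a b c => beats_trans E μ hpos⟩
  letI : IsIrrefl A (Beats E μ) := ⟨fun a h => lt_irrefl _ h⟩
  obtain ⟨c, -, hc⟩ := (Finite.wellFounded_of_trans_of_irrefl (Beats E μ)).has_min
    Set.univ ⟨Classical.arbitrary A, trivial⟩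
  exact ⟨c, fun b hb => hc b trivial hb⟩
end
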